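/- arXiv:1603.06293 — 3 statements merged into one kernel-verified Lean document; each statement's English description precedes it below -/
import Mathlib

section
/- If ω is a weight function on [0,∞) (i.e., measurable, locally bounded, ω(t) ≥ 1, and ω(s+t) ≤ ω(s)ω(t) for all s,t ≥ 0) satisfying liminf_{t→∞} ω(s+t)/ω(t) ≥ 1 for all s > 0, then the function ω̃ defined by ω̃(s) = limsup_{t→∞} ω(t+s)/ω(t) for s ≥ 0 and ω̃(s) = 1 for s < 0 is a weight function on ℝ: ω̃(s) ≥ 1 for all s, and ω̃(s+t) ≤ ω̃(s)ω̃(t) for all s,t ∈ ℝ. -/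
open Filter

/-- If ω is a weight on [0,∞) (measurable, locally bounded, ω ≥ 1, submultiplicative)
with liminf_{t→∞} ω(s+t)/ω(t) ≥ 1 for all s > 0, then ω̃ (limsup quotient for s ≥ 0,
equal to 1 for s < 0) is a weight on ℝ: ω̃ ≥ 1 and ω̃ is submultiplicative. -/
theorem stmt0 (ω : ℝ → ℝ)
    (hmeas : Measurable ω)
    (hpos : ∀ t : ℝ, 0 ≤ t → 0 < ω t)
    (hlb : ∀ b : ℝ, ∃ C : ℝ, ∀ t ∈ Set.Icc (0:ℝ) b, ω t ≤ C)
    (h1 : ∀ t : ℝ, 0 ≤ t → 1 ≤ ω t)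
    (hsub : ∀ s t : ℝ, 0 ≤ s → 0 ≤ t → ω (s + t) ≤ ω s * ω t)
    (hinf : ∀ s : ℝ, 0 < s → 1 ≤ liminf (fun t : ℝ => ω (s + t) / ω t) atTop)
    (ωt : ℝ → ℝ)
    (hωt : ∀ s : ℝ, ωt s =
      if 0 ≤ s then limsup (fun t : ℝ => ω (t + s) / ω t) atTop else 1) :
    (∀ s : ℝ, 1 ≤ ωt s) ∧ (∀ s t : ℝ, ωt (s + t) ≤ ωt s * ωt t) := by
  classical
  set g : ℝ → ℝ → ℝ := fun s u => ω (u + s) / ω u with hgdef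
  set M : ℝ → ℝ := fun s => limsup (g s) atTop with hMdef
  -- eventual positivity
  have hev : ∀ s : ℝ, ∀ᶠ u in atTop, 0 < g s u := by
    intro s
    filter_upwards [eventually_ge_atTop (max 0 (-s))] with u hu
    have h0 : (0:ℝ) ≤ u := le_trans (le_max_left _ _) hu
    have h1' : (0:ℝ) ≤ u + s := by
      have := le_trans (le_max_right 0 (-s)) hu; linarith
    exact div_pos (hpos _ h1') (hpos _ h0)
  -- eventual upper bound for s ≥ 0
  have hbd0 : ∀ s : ℝ, 0 ≤ s → ∀ᶠ u in atTop, g s u ≤ ω s := by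
    intro s hs
    filter_upwards [eventually_ge_atTop (0:ℝ)] with u hu
    have hus := hsub u s hu hs
    show ω (u + s) / ω u ≤ ω s
    rw [div_le_iff₀ (hpos u hu)]
    calc ω (u + s) ≤ ω u * ω s := hus
      _ = ω s * ω u := mul_comm _ _
  -- eventual upper bound (1-ε)⁻¹ for s < 0
  have hkey : ∀ s : ℝ, s < 0 → ∀ ε : ℝ, 0 < ε → ε < 1 →
      ∀ᶠ u in atTop, g s u ≤ (1 - ε)⁻¹ := by
    intro s hs ε hε hε1
    have hs' : 0 < -s := by linarith
    have hli : 1 ≤ liminf (g (-s)) atTop := by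
      have h := hinf (-s) hs'
      have heq : (fun t : ℝ => ω (-s + t) / ω t) = g (-s) := by
        funext t; show ω (-s + t) / ω t = ω (t + -s) / ω t; rw [add_comm]
      rwa [heq] at h
    have hb : IsBoundedUnder (· ≥ ·) atTop (g (-s)) :=
      ⟨0, eventually_map.mpr ((hev (-s)).mono fun u h => h.le)⟩
    have heps : ∀ᶠ u in atTop, 1 - ε < g (-s) u :=
      eventually_lt_of_lt_liminf (lt_of_lt_of_le (by linarith) hli) hb
    have htend : Tendsto (fun u : ℝ => u + s) atTop atTop :=
      tendsto_atTop_add_const_right _ s tendsto_id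
    filter_upwards [htend.eventually heps, eventually_ge_atTop (max 0 (-s))] with u hu2 hu
    have h0 : (0:ℝ) ≤ u := le_trans (le_max_left _ _) hu
    have h1' : (0:ℝ) ≤ u + s := by
      have := le_trans (le_max_right 0 (-s)) hu; linarith
    have p1 : 0 < ω u := hpos _ h0
    have p2 : 0 < ω (u + s) := hpos _ h1'
    have h1e : 0 < 1 - ε := by linarith
    have hu2' : 1 - ε < ω u / ω (u + s) := by
      have : u + s + -s = u := by ring
      simpa [hgdef, this] using hu2
    have hmul : (1 - ε) * ω (u + s) < ω u := (lt_div_iff₀ p2).mp hu2'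
    show ω (u + s) / ω u ≤ (1 - ε)⁻¹
    rw [div_le_iff₀ p1]
    calc ω (u + s) = (1 - ε)⁻¹ * ((1 - ε) * ω (u + s)) := by field_simp
      _ ≤ (1 - ε)⁻¹ * ω u := by
          exact mul_le_mul_of_nonneg_left hmul.le (by positivity)
  -- boundedness above
  have hbdd : ∀ s : ℝ, IsBoundedUnder (· ≤ ·) atTop (g s) := by
    intro s
    rcases le_or_gt 0 s with hs | hs
    · exact ⟨ω s, eventually_map.mpr (hbd0 s hs)⟩
    · exact ⟨(1 - 2⁻¹)⁻¹, eventually_map.mpr (hkey s hs 2⁻¹ (by norm_num) (by norm_num))⟩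
  -- boundedness below
  have hbge : ∀ s : ℝ, IsBoundedUnder (· ≥ ·) atTop (g s) :=
    fun s => ⟨0, eventually_map.mpr ((hev s).mono fun u h => h.le)⟩
  have hM0 : ∀ s : ℝ, 0 ≤ M s := fun s =>
    le_limsup_of_frequently_le (((hev s).mono fun u h => h.le).frequently) (hbdd s)
  -- M s ≥ 1 for s ≥ 0
  have hM1 : ∀ s : ℝ, 0 ≤ s → 1 ≤ M s := by
    intro s hs
    rcases eq_or_lt_of_le hs with hs0 | hs0
    · refine le_limsup_of_frequently_le ?_ (hbdd s)
      refine Eventually.frequently ?_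
      filter_upwards [eventually_ge_atTop (0:ℝ)] with u hu
      have : u + s = u := by rw [← hs0]; ring
      show (1:ℝ) ≤ ω (u + s) / ω u
      rw [this, div_self (hpos u hu).ne']
    · have hli : 1 ≤ liminf (g s) atTop := by
        have h := hinf s hs0
        have heq : (fun t : ℝ => ω (s + t) / ω t) = g s := by
          funext t; show ω (s + t) / ω t = ω (t + s) / ω t; rw [add_comm]
        rwa [heq] at h
      exact le_trans hli (liminf_le_limsup (hbdd s) (hbge s))
  -- M s ≤ 1 for s < 0
  have hMneg : ∀ s : ℝ, s < 0 → M s ≤ 1 := by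
    intro s hs
    refine le_of_forall_gt_imp_ge_of_dense ?_
    intro c hc
    have hc0 : (0:ℝ) < c := lt_trans one_pos hc
    have hεpos : 0 < 1 - c⁻¹ := by
      have : c⁻¹ < 1 := inv_lt_one_of_one_lt₀ hc
      linarith
    have hε1 : 1 - c⁻¹ < 1 := by
      have : 0 < c⁻¹ := inv_pos.mpr hc0
      linarith
    have h := hkey s hs (1 - c⁻¹) hεpos hε1
    have hval : (1 - (1 - c⁻¹))⁻¹ = c := by
      have : 1 - (1 - c⁻¹) = c⁻¹ := by ring
      rw [this, inv_inv]
    refine limsup_le_of_le ((hbge s).isCoboundedUnder_flip) ?_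
    filter_upwards [h] with u hu
    rwa [hval] at hu
  -- submultiplicativity of M
  have hprod : ∀ s t : ℝ, M (s + t) ≤ M s * M t := by
    intro s t
    have htend : Tendsto (fun u : ℝ => u + t) atTop atTop :=
      tendsto_atTop_add_const_right _ t tendsto_id
    have hcont : Tendsto (fun ε : ℝ => (M s + ε) * (M t + ε)) (nhds 0)
        (nhds ((M s + 0) * (M t + 0))) :=
      ((continuous_const.add continuous_id).mul (continuous_const.add continuous_id)).tendsto 0
    have hlimit : Tendsto (fun ε : ℝ => (M s + ε) * (M t + ε))
        (nhdsWithin (0:ℝ) (Set.Ioi 0)) (nhds (M s * M t)) := by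
      simpa using hcont.mono_left nhdsWithin_le_nhds
    refine ge_of_tendsto hlimit ?_
    · filter_upwards [self_mem_nhdsWithin] with ε hε
      have hε : (0:ℝ) < ε := hε
      have hA : ∀ᶠ u in atTop, g s (u + t) < M s + ε :=
        htend.eventually (eventually_lt_of_limsup_lt (lt_add_of_pos_right _ hε) (hbdd s))
      have hB : ∀ᶠ u in atTop, g t u < M t + ε :=
        eventually_lt_of_limsup_lt (lt_add_of_pos_right _ hε) (hbdd t)
      refine limsup_le_of_le ((hbge (s + t)).isCoboundedUnder_flip) ?_
      filter_upwards [hA, hB, hev t, eventually_ge_atTop (max 0 (-t))] with u h1' h2' h4' hu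
      have p1 : 0 < ω u := hpos _ (le_trans (le_max_left _ _) hu)
      have p2 : 0 < ω (u + t) := by
        refine hpos _ ?_
        have := le_trans (le_max_right 0 (-t)) hu; linarith
      have hdecomp : g (s + t) u = g s (u + t) * g t u := by
        show ω (u + (s + t)) / ω u = (ω (u + t + s) / ω (u + t)) * (ω (u + t) / ω u)
        have e1 : u + (s + t) = u + t + s := by ring
        rw [e1]
        field_simp
      rw [hdecomp]
      have hMs : 0 ≤ M s + ε := by have := hM0 s; linarith
      exact mul_le_mul h1'.le h2'.le h4'.le hMs
  -- conclude
  have hone : ∀ s : ℝ, 1 ≤ ωt s := by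
    intro s
    rcases lt_or_ge s 0 with hs | hs
    · rw [hωt s, if_neg (not_le.mpr hs)]
    · rw [hωt s, if_pos hs]
      exact hM1 s hs
  refine ⟨hone, ?_⟩
  intro s t
  have hle : ∀ r : ℝ, M r ≤ ωt r := by
    intro r
    rcases le_or_gt 0 r with hr | hr
    · rw [hωt r, if_pos hr]
    · rw [hωt r, if_neg (not_le.mpr hr)]
      exact hMneg r hr
  rcases lt_or_ge (s + t) 0 with hst | hst
  · rw [hωt (s + t), if_neg (not_le.mpr hst)]
    nlinarith [hone s, hone t]
  · rw [hωt (s + t), if_pos hst]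
    have hM : M (s + t) ≤ M s * M t := hprod s t
    have h2 : M s * M t ≤ ωt s * ωt t := by
      have h0s : 0 ≤ ωt s := le_trans zero_le_one (hone s)
      exact mul_le_mul (hle s) (hle t) (hM0 t) h0s
    exact le_trans hM h2
end

section
/- With q and N as above and assuming liminf_{t→∞} β(t+s)/β(t) ≥ 1 for all s ≥ 0, the induced operators on the quotient Y/N satisfy the lower bound: for every y ∈ Y and t ≥ 0, q(U(t)y) ≥ q(y). Consequently the extension V(t) to the completion Z of (Y/N, q̂) satisfies ‖V(t)z‖ ≥ ‖z‖ for all z ∈ Z. -/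
open Filter

/-- With q(y) = limsup_{t→∞} β(t)⁻¹‖U(t)Ry‖ and liminf_{t→∞} β(t+s)/β(t) ≥ 1 for
s ≥ 0, one has q(U(t)y) ≥ q(y) for all y and t ≥ 0; consequently the extension V(t)
on the completion Z of (Y/N, q̂) (realized by a map π : Y → Z with ‖π y‖ = q(y) and
dense range, intertwining V(t)π = πU(t)) satisfies ‖V(t)z‖ ≥ ‖z‖ for all z ∈ Z. -/
theorem stmt6 {Y Z : Type*} [NormedAddCommGroup Y] [NormedSpace ℂ Y] [CompleteSpace Y]
    [NormedAddCommGroup Z] [NormedSpace ℂ Z] [CompleteSpace Z]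
    (U : ℝ → Y →L[ℂ] Y) (hU0 : U 0 = 1)
    (hUsg : ∀ s t : ℝ, 0 ≤ s → 0 ≤ t → U (s + t) = U s ∘L U t)
    (hUcont : ∀ y : Y, ContinuousOn (fun t : ℝ => U t y) (Set.Ici 0))
    (R : Y →L[ℂ] Y) (hcomm : ∀ t : ℝ, 0 ≤ t → (U t).comp R = R.comp (U t))
    (β : ℝ → ℝ) (hβ1 : ∀ t : ℝ, 0 ≤ t → 1 ≤ β t)
    (hβsub : ∀ s t : ℝ, 0 ≤ s → 0 ≤ t → β (s + t) ≤ β s * β t)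
    (hbound : ∀ t : ℝ, 0 ≤ t → ∀ y : Y, ‖U t (R y)‖ ≤ β t * ‖y‖)
    (hβinf : ∀ s : ℝ, 0 ≤ s → 1 ≤ liminf (fun t : ℝ => β (t + s) / β t) atTop)
    (q : Y → ℝ)
    (hq : ∀ y : Y, q y = limsup (fun t : ℝ => (β t)⁻¹ * ‖U t (R y)‖) atTop)
    -- π : Y → Z realizes the quotient Y/N = Y/ker q isometrically (w.r.t. q̂) into
    -- the completion Z, with dense range:
    (π : Y →ₗ[ℂ] Z) (hπ : ∀ y : Y, ‖π y‖ = q y) (hdense : DenseRange π)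
    -- V(t) is the continuous extension of the induced map π(y) ↦ π(U(t)y):
    (V : ℝ → Z →L[ℂ] Z) (hV : ∀ t : ℝ, 0 ≤ t → ∀ y : Y, V t (π y) = π (U t y)) :
    (∀ t : ℝ, 0 ≤ t → ∀ y : Y, q y ≤ q (U t y)) ∧
    (∀ t : ℝ, 0 ≤ t → ∀ z : Z, ‖z‖ ≤ ‖V t z‖) := by
  -- basic facts about β
  have hβpos : ∀ r : ℝ, 0 ≤ r → 0 < β r := fun r hr => lt_of_lt_of_le one_pos (hβ1 r hr)
  -- boundedness of the defining functions
  have hbdd : ∀ y : Y, IsBoundedUnder (· ≤ ·) atTop (fun s : ℝ => (β s)⁻¹ * ‖U s (R y)‖) := by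
    intro y
    refine ⟨‖y‖, eventually_atTop.2 ⟨0, fun s hs => ?_⟩⟩
    have h1 : (β s)⁻¹ * ‖U s (R y)‖ ≤ (β s)⁻¹ * (β s * ‖y‖) :=
      mul_le_mul_of_nonneg_left (hbound s hs y) (inv_nonneg.2 (hβpos s hs).le)
    calc (β s)⁻¹ * ‖U s (R y)‖ ≤ (β s)⁻¹ * (β s * ‖y‖) := h1
      _ = ‖y‖ := inv_mul_cancel_left₀ (hβpos s hs).ne' ‖y‖
  have hnn : ∀ y : Y, ∀ᶠ s : ℝ in atTop, 0 ≤ (β s)⁻¹ * ‖U s (R y)‖ := by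
    intro y
    exact eventually_atTop.2 ⟨0, fun s hs =>
      mul_nonneg (inv_nonneg.2 (hβpos s hs).le) (norm_nonneg _)⟩
  have hqnn : ∀ y : Y, 0 ≤ q y := by
    intro y
    rw [hq y]
    exact le_limsup_of_frequently_le ((hnn y).frequently) (hbdd y)
  have main : ∀ t : ℝ, 0 ≤ t → ∀ y : Y, q y ≤ q (U t y) := by
    intro t ht y
    set u : ℝ → ℝ := fun s => (β s)⁻¹ * ‖U s (R y)‖ with hu
    -- the pointwise identity
    have key : ∀ r : ℝ, 0 ≤ r → U r (R (U t y)) = U (r + t) (R y) := by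
      intro r hr
      have h1 : U r (R (U t y)) = R (U r (U t y)) :=
        congrFun (congrArg DFunLike.coe (hcomm r hr)) (U t y)
      have h2 : U r (U t y) = U (r + t) y := by rw [hUsg r t hr ht]; rfl
      have h3 : R (U (r + t) y) = U (r + t) (R y) :=
        (congrFun (congrArg DFunLike.coe (hcomm (r + t) (by linarith))) y).symm
      rw [h1, h2, h3]
    -- For every small ε > 0 we have the bound
    have step : ∀ ε : ℝ, 0 < ε → ε < 1 → (1 - ε) * (q y - ε) ≤ q (U t y) := by
      intro ε hε hε1
      have hq2 : 0 ≤ q (U t y) := hqnn (U t y)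
      rcases le_or_gt (q y - ε) 0 with hle | hpos
      · exact le_trans (mul_nonpos_of_nonneg_of_nonpos (by linarith) hle) hq2
      -- frequently u s > q y - ε
      have hcob : IsCoboundedUnder (· ≤ ·) atTop u :=
        IsBoundedUnder.isCoboundedUnder_le ⟨0, by simpa using (hnn y)⟩
      have hf : ∃ᶠ s in atTop, q y - ε < u s := by
        apply frequently_lt_of_lt_limsup hcob
        rw [← hq y]; linarith
      have hfreq : ∃ᶠ r : ℝ in atTop, q y - ε < u (r + t) := by
        rw [frequently_atTop] at hf ⊢
        intro a
        obtain ⟨s, hs, hus⟩ := hf (max a 0 + t)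
        refine ⟨s - t, le_trans (le_max_left a 0) (by linarith), by simpa using hus⟩
      -- eventually β(r+t)/β r > 1 - ε
      have hcob2 : IsBoundedUnder (· ≥ ·) atTop (fun r : ℝ => β (r + t) / β r) := by
        refine ⟨0, eventually_atTop.2 ⟨0, fun r hr => ?_⟩⟩
        show (0:ℝ) ≤ β (r + t) / β r
        exact div_nonneg (hβpos (r + t) (by linarith)).le (hβpos r hr).le
      have hev : ∀ᶠ r : ℝ in atTop, 1 - ε < β (r + t) / β r := by
        apply eventually_lt_of_lt_liminf _ hcob2
        exact lt_of_lt_of_le (by linarith) (hβinf t ht)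
      -- combine
      have hcomb : ∃ᶠ r : ℝ in atTop,
          (1 - ε) * (q y - ε) ≤ (β r)⁻¹ * ‖U r (R (U t y))‖ := by
        refine (hfreq.and_eventually (hev.and (eventually_ge_atTop 0))).mono ?_
        rintro r ⟨h1, h2, hr0⟩
        have hβr := hβpos r hr0
        have hβrt := hβpos (r + t) (by linarith)
        have hid : (β r)⁻¹ * ‖U r (R (U t y))‖ = (β (r + t) / β r) * u (r + t) := by
          rw [key r hr0, hu]
          field_simp
        rw [hid]
        have hfnn : (0:ℝ) ≤ 1 - ε := by linarith
        exact mul_le_mul h2.le h1.le (by linarith) (le_trans hfnn h2.le)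
      rw [hq (U t y)]
      exact le_limsup_of_frequently_le hcomb (hbdd (U t y))
    -- take ε → 0⁺
    have htend : Tendsto (fun ε : ℝ => (1 - ε) * (q y - ε)) (nhdsWithin 0 (Set.Ioi 0))
        (nhds (q y)) := by
      have : Tendsto (fun ε : ℝ => (1 - ε) * (q y - ε)) (nhds 0) (nhds ((1 - 0) * (q y - 0))) := by
        apply Tendsto.mul <;> exact (tendsto_const_nhds.sub tendsto_id)
      simpa using this.mono_left nhdsWithin_le_nhds
    refine le_of_tendsto htend ?_
    filter_upwards [Ioo_mem_nhdsGT_of_mem (by constructor <;> norm_num :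
        (0:ℝ) ∈ Set.Ico 0 1)] with ε hε
    exact step ε hε.1 hε.2
  refine ⟨main, fun t ht z => ?_⟩
  have hclosed : IsClosed {z : Z | ‖z‖ ≤ ‖V t z‖} :=
    isClosed_le continuous_norm ((V t).continuous.norm)
  refine hdense.induction_on z hclosed fun y => ?_
  show ‖π y‖ ≤ ‖V t (π y)‖
  rw [hV t ht y, hπ, hπ]
  exact main t ht y
end

section
/- Define ‖x‖_Y := sup_{t≥0} ‖e^{-δt}(T_n(t)Aⁿ(μ-A)^{-n}x + Σ_{j=0}^{n-1}(tʲ/j!)Aʲ(μ-A)^{-n}x)‖ for x ∈ X, where μ > δ > 0, 0 < δ, (T_n(t)) is an exponentially bounded n-times integrated semigroup of type ≤ δ with generator A, and μ ∈ ρ(A). Then ‖·‖_Y is a norm on X and there is M_δ > 0 such that ‖(μ-A)^{-n}x‖ ≤ ‖x‖_Y ≤ M_δ‖x‖ for all x ∈ X. -/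
open Filter

/-- `R` is the resolvent of the (possibly unbounded) operator `L` with domain `D`
at the point `lam`. -/
def IsResolvent {E : Type*} [NormedAddCommGroup E] [NormedSpace ℂ E]
    (D : Submodule ℂ E) (L : E →ₗ[ℂ] E) (lam : ℂ) (R : E →L[ℂ] E) : Prop :=
  (∀ y : E, R y ∈ D ∧ lam • R y - L (R y) = y) ∧ ∀ y ∈ D, R (lam • y - L y) = y

/-- With μ > δ > δ' > 0, (T_n(t)) an n-times integrated semigroup generated by A with
‖T_n(t)‖ ≤ Ce^{δ't}, T_n(0) = 0 and μ ∈ ρ(A), the quantity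
‖x‖_Y := sup_{t≥0} e^{-δt}‖T_n(t)Aⁿ(μ-A)^{-n}x + Σ_{j=0}^{n-1}(tʲ/j!)Aʲ(μ-A)^{-n}x‖
is a norm on X and there is M_δ > 0 with ‖(μ-A)^{-n}x‖ ≤ ‖x‖_Y ≤ M_δ‖x‖ for all x.
(Here Aⁿ(μ-A)^{-n} = Qⁿ and Aʲ(μ-A)^{-n} = QʲRμ^{n-j}, Q = μRμ - 1, Rμ = (μ-A)⁻¹.) -/
theorem stmt16 {X : Type*} [NormedAddCommGroup X] [NormedSpace ℂ X] [CompleteSpace X]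
    (D : Submodule ℂ X) (A : X →ₗ[ℂ] X)
    (n : ℕ) (hn : 1 ≤ n)
    (μ δ δ' C : ℝ) (hδ' : 0 < δ') (hδ : δ' < δ) (hμ : δ < μ) (hC : 0 < C)
    (Tn : ℝ → X →L[ℂ] X) (hT0 : Tn 0 = 0)
    (hTexp : ∀ t : ℝ, 0 ≤ t → ‖Tn t‖ ≤ C * Real.exp (δ' * t))
    (Rμ : X →L[ℂ] X) (hres : IsResolvent D A (μ : ℂ) Rμ)
    (NY : X → ℝ)
    (hNY : ∀ x : X, NY x = sSup ((fun t : ℝ =>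
        ‖Real.exp (-δ * t) •
          (Tn t ((((μ : ℂ) • Rμ - 1) ^ n) x) +
            ∑ j ∈ Finset.range n, ((t ^ j / (Nat.factorial j) : ℝ)) •
              ((((μ : ℂ) • Rμ - 1) ^ j) ((Rμ ^ (n - j)) x)))‖) '' Set.Ici (0:ℝ))) :
    (∀ x : X, 0 ≤ NY x) ∧
    (∀ x : X, NY x = 0 → x = 0) ∧
    (∀ x y : X, NY (x + y) ≤ NY x + NY y) ∧
    (∀ (c : ℂ) (x : X), NY (c • x) = ‖c‖ * NY x) ∧
    (∀ x : X, ‖(Rμ ^ n) x‖ ≤ NY x) ∧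
    (∃ M : ℝ, 0 < M ∧ ∀ x : X, NY x ≤ M * ‖x‖) := by
  set Q : X →L[ℂ] X := (μ : ℂ) • Rμ - 1 with hQdef
  -- the combined operator
  set G : ℝ → X →L[ℂ] X := fun t =>
    (Tn t).comp (Q ^ n) + ∑ j ∈ Finset.range n,
      ((t ^ j / (Nat.factorial j) : ℝ)) • ((Q ^ j).comp (Rμ ^ (n - j))) with hGdef
  have hGapp : ∀ (t : ℝ) (x : X),
      G t x = Tn t ((Q ^ n) x) + ∑ j ∈ Finset.range n,
        ((t ^ j / (Nat.factorial j) : ℝ)) • ((Q ^ j) ((Rμ ^ (n - j)) x)) := by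
    intro t x
    simp [hGdef, ContinuousLinearMap.sum_apply]
  set f : X → ℝ → ℝ := fun x t => ‖Real.exp (-δ * t) • (G t x)‖ with hfdef
  have hNY' : ∀ x : X, NY x = sSup (f x '' Set.Ici (0:ℝ)) := by
    intro x
    rw [hNY x]
    congr 1
    ext r
    constructor
    · rintro ⟨t, ht, rfl⟩; exact ⟨t, ht, by simp [hfdef, hGapp]⟩
    · rintro ⟨t, ht, rfl⟩; exact ⟨t, ht, by simp [hfdef, hGapp]⟩
  -- value at 0
  have hf0 : ∀ x : X, f x 0 = ‖(Rμ ^ n) x‖ := by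
    intro x
    have hsum : ∑ j ∈ Finset.range n,
        (((0:ℝ) ^ j / (Nat.factorial j) : ℝ)) • ((Q ^ j) ((Rμ ^ (n - j)) x))
        = (Rμ ^ n) x := by
      rw [Finset.sum_eq_single 0]
      · simp
      · intro j hj hj0
        simp [zero_pow hj0]
      · intro h; exact absurd (Finset.mem_range.mpr hn) h
    rw [show f x 0 = ‖Real.exp (-δ * 0) • (G 0 x)‖ from rfl, hGapp, hsum, hT0]
    simp
  -- global bound
  set M0 : ℝ := C * ‖Q ^ n‖ + ∑ j ∈ Finset.range n,
      ‖Q ^ j‖ * ‖Rμ ^ (n - j)‖ / δ ^ j with hM0def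
  have hδpos : (0:ℝ) < δ := hδ'.trans hδ
  have hM0nonneg : 0 ≤ M0 := by
    apply add_nonneg
    · positivity
    · apply Finset.sum_nonneg
      intro j _
      positivity
  have hbound : ∀ (x : X) (t : ℝ), 0 ≤ t → f x t ≤ M0 * ‖x‖ := by
    intro x t ht
    have hexp : (0:ℝ) < Real.exp (-δ * t) := Real.exp_pos _
    have h1 : f x t = Real.exp (-δ * t) * ‖G t x‖ := by
      rw [hfdef]
      simp [norm_smul, Real.abs_exp]
    rw [h1]
    have hGx : ‖G t x‖ ≤ ‖G t‖ * ‖x‖ := (G t).le_opNorm x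
    have hGnorm : ‖G t‖ ≤ C * Real.exp (δ' * t) * ‖Q ^ n‖ +
        ∑ j ∈ Finset.range n, (t ^ j / (Nat.factorial j)) * (‖Q ^ j‖ * ‖Rμ ^ (n - j)‖) := by
      rw [hGdef]
      refine le_trans (norm_add_le _ _) (add_le_add ?_ ?_)
      · calc ‖(Tn t).comp (Q ^ n)‖ ≤ ‖Tn t‖ * ‖Q ^ n‖ := ContinuousLinearMap.opNorm_comp_le _ _
          _ ≤ C * Real.exp (δ' * t) * ‖Q ^ n‖ :=
            mul_le_mul_of_nonneg_right (hTexp t ht) (norm_nonneg _)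
      · refine le_trans (norm_sum_le _ _) (Finset.sum_le_sum ?_)
        intro j _
        have habs : ‖((t ^ j / (Nat.factorial j) : ℝ))‖ = t ^ j / (Nat.factorial j) := by
          rw [Real.norm_eq_abs, abs_of_nonneg]; positivity
        calc ‖((t ^ j / (Nat.factorial j) : ℝ)) • ((Q ^ j).comp (Rμ ^ (n - j)))‖
            ≤ (t ^ j / (Nat.factorial j)) * ‖(Q ^ j).comp (Rμ ^ (n - j))‖ := by
              refine le_trans (ContinuousLinearMap.opNorm_smul_le _ _) ?_
              rw [habs]
          _ ≤ (t ^ j / (Nat.factorial j)) * (‖Q ^ j‖ * ‖Rμ ^ (n - j)‖) := by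
              apply mul_le_mul_of_nonneg_left (ContinuousLinearMap.opNorm_comp_le _ _)
              positivity
    have key : Real.exp (-δ * t) * ‖G t‖ ≤ M0 := by
      calc Real.exp (-δ * t) * ‖G t‖
          ≤ Real.exp (-δ * t) * (C * Real.exp (δ' * t) * ‖Q ^ n‖ +
            ∑ j ∈ Finset.range n, (t ^ j / (Nat.factorial j)) * (‖Q ^ j‖ * ‖Rμ ^ (n - j)‖)) :=
            mul_le_mul_of_nonneg_left hGnorm hexp.le
        _ = Real.exp (-δ * t) * (C * Real.exp (δ' * t)) * ‖Q ^ n‖ +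
            ∑ j ∈ Finset.range n,
              (Real.exp (-δ * t) * (t ^ j / (Nat.factorial j))) * (‖Q ^ j‖ * ‖Rμ ^ (n - j)‖) := by
            rw [mul_add, Finset.mul_sum, ← mul_assoc]
            congr 1
            refine Finset.sum_congr rfl fun j _ => by ring
        _ ≤ M0 := by
            rw [hM0def]
            apply add_le_add
            · have h2 : Real.exp (-δ * t) * (C * Real.exp (δ' * t)) ≤ C := by
                have he1 : Real.exp (-δ * t) * Real.exp (δ' * t) ≤ 1 := by
                  rw [← Real.exp_add]
                  exact Real.exp_le_one_iff.mpr (by nlinarith)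
                nlinarith [Real.exp_pos (-δ * t), Real.exp_pos (δ' * t)]
              exact mul_le_mul_of_nonneg_right h2 (norm_nonneg _)
            · apply Finset.sum_le_sum
              intro j _
              have hδj : (0:ℝ) < δ ^ j := by positivity
              have h3 : Real.exp (-δ * t) * (t ^ j / (Nat.factorial j)) ≤ 1 / δ ^ j := by
                have h4 : (δ * t) ^ j / (Nat.factorial j) ≤ Real.exp (δ * t) :=
                  Real.pow_div_factorial_le_exp (δ * t) (mul_nonneg hδpos.le ht) j
                rw [mul_pow] at h4
                have he : Real.exp (-δ * t) * Real.exp (δ * t) = 1 := by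
                  rw [← Real.exp_add]; simp
                have h5 : Real.exp (-δ * t) * (δ ^ j * t ^ j / (Nat.factorial j)) ≤
                    Real.exp (-δ * t) * Real.exp (δ * t) :=
                  mul_le_mul_of_nonneg_left h4 hexp.le
                rw [he] at h5
                rw [le_div_iff₀ hδj]
                calc Real.exp (-δ * t) * (t ^ j / (Nat.factorial j)) * δ ^ j
                    = Real.exp (-δ * t) * (δ ^ j * t ^ j / (Nat.factorial j)) := by ring
                  _ ≤ 1 := h5
              calc Real.exp (-δ * t) * (t ^ j / (Nat.factorial j)) * (‖Q ^ j‖ * ‖Rμ ^ (n - j)‖)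
                  ≤ (1 / δ ^ j) * (‖Q ^ j‖ * ‖Rμ ^ (n - j)‖) :=
                    mul_le_mul_of_nonneg_right h3 (by positivity)
                _ = ‖Q ^ j‖ * ‖Rμ ^ (n - j)‖ / δ ^ j := by ring
    calc Real.exp (-δ * t) * ‖G t x‖ ≤ Real.exp (-δ * t) * (‖G t‖ * ‖x‖) :=
        mul_le_mul_of_nonneg_left hGx hexp.le
      _ = (Real.exp (-δ * t) * ‖G t‖) * ‖x‖ := by ring
      _ ≤ M0 * ‖x‖ := mul_le_mul_of_nonneg_right key (norm_nonneg _)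
  -- basic facts about the sup
  have hne : ∀ x : X, (f x '' Set.Ici (0:ℝ)).Nonempty :=
    fun x => ⟨f x 0, 0, Set.self_mem_Ici, rfl⟩
  have hbdd : ∀ x : X, BddAbove (f x '' Set.Ici (0:ℝ)) := by
    intro x
    refine ⟨M0 * ‖x‖, ?_⟩
    rintro r ⟨t, ht, rfl⟩
    exact hbound x t ht
  have hmem : ∀ (x : X) (t : ℝ), 0 ≤ t → f x t ≤ NY x := by
    intro x t ht
    rw [hNY' x]
    exact le_csSup (hbdd x) ⟨t, ht, rfl⟩
  have hlow : ∀ x : X, ‖(Rμ ^ n) x‖ ≤ NY x := by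
    intro x
    rw [← hf0 x]
    exact hmem x 0 le_rfl
  have hpos : ∀ x : X, 0 ≤ NY x := fun x => le_trans (norm_nonneg _) (hlow x)
  -- injectivity of Rμ and its powers
  have hRinj : ∀ y : X, Rμ y = 0 → y = 0 := by
    intro y hy
    have h := (hres.1 y).2
    rw [hy] at h
    simpa using h.symm
  have hRninj : ∀ (m : ℕ) (y : X), (Rμ ^ m) y = 0 → y = 0 := by
    intro m
    induction m with
    | zero => intro y hy; simpa using hy
    | succ k ih =>
      intro y hy
      rw [pow_succ, ContinuousLinearMap.mul_apply] at hy
      exact hRinj y (ih (Rμ y) hy)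
  -- definiteness
  have hdef : ∀ x : X, NY x = 0 → x = 0 := by
    intro x hx
    have h := hlow x
    rw [hx] at h
    exact hRninj n x (norm_le_zero_iff.mp h)
  -- triangle inequality
  have htri : ∀ x y : X, NY (x + y) ≤ NY x + NY y := by
    intro x y
    rw [hNY' (x + y)]
    apply Real.sSup_le
    · rintro r ⟨t, ht, rfl⟩
      have hsplit : f (x + y) t ≤ f x t + f y t := by
        simp only [hfdef, map_add, smul_add]
        exact norm_add_le _ _
      exact le_trans hsplit (add_le_add (hmem x t ht) (hmem y t ht))
    · exact add_nonneg (hpos x) (hpos y)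
  -- homogeneity
  have hfsmul : ∀ (c : ℂ) (x : X) (t : ℝ), f (c • x) t = ‖c‖ * f x t := by
    intro c x t
    simp only [hfdef, map_smul]
    rw [smul_comm, norm_smul]
  have hhom_le : ∀ (c : ℂ) (x : X), NY (c • x) ≤ ‖c‖ * NY x := by
    intro c x
    rw [hNY' (c • x)]
    apply Real.sSup_le
    · rintro r ⟨t, ht, rfl⟩
      rw [hfsmul c x t]
      exact mul_le_mul_of_nonneg_left (hmem x t ht) (norm_nonneg c)
    · exact mul_nonneg (norm_nonneg c) (hpos x)
  have hhom : ∀ (c : ℂ) (x : X), NY (c • x) = ‖c‖ * NY x := by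
    intro c x
    rcases eq_or_ne c 0 with hc | hc
    · subst hc
      simp only [zero_smul, norm_zero, zero_mul]
      refine le_antisymm ?_ (hpos 0)
      have := hhom_le 0 x
      simpa using this
    · refine le_antisymm (hhom_le c x) ?_
      have h := hhom_le c⁻¹ (c • x)
      rw [inv_smul_smul₀ hc] at h
      have hc' : (0:ℝ) < ‖c‖ := norm_pos_iff.mpr hc
      calc ‖c‖ * NY x ≤ ‖c‖ * (‖c⁻¹‖ * NY (c • x)) :=
            mul_le_mul_of_nonneg_left h (norm_nonneg c)
        _ = NY (c • x) := by
            rw [norm_inv]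
            rw [← mul_assoc, mul_inv_cancel₀ hc'.ne', one_mul]
  -- upper bound
  have hupper : ∀ x : X, NY x ≤ (M0 + 1) * ‖x‖ := by
    intro x
    have h1 : NY x ≤ M0 * ‖x‖ := by
      rw [hNY' x]
      apply Real.sSup_le
      · rintro r ⟨t, ht, rfl⟩
        exact hbound x t ht
      · exact mul_nonneg hM0nonneg (norm_nonneg x)
    nlinarith [norm_nonneg x]
  exact ⟨hpos, hdef, htri, hhom, hlow,
    ⟨M0 + 1, by linarith, hupper⟩⟩
end
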